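/- The continuous q-Hermite polynomials satisfy H_n(cos θ | q) = Σ_{k=0}^n [n choose k]_q e^{i(n-2k)θ}, where H_n(x|q) is defined by the recurrence H_{n+1}(x|q) = 2x H_n(x|q) - (1-q^n) H_{n-1}(x|q), H_0 = 1, H_1 = 2x. -/

import Mathlib

/-! With `z = e^{iθ}` we have `2 cos θ = z + z⁻¹`, and the sums `S_n = ∑ₖ [n choose k]_q z^{n-2k}`
satisfy the q-Hermite recurrence `S_{n+2} = (z + z⁻¹) S_{n+1} - (1 - q^{n+1}) S_n` with
`S_0 = 1`, `S_1 = z + z⁻¹`. Comparing coefficients of `z^{n-2k}`, the recurrence is the three-term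
relation `[n+2, k+1] = [n+1, k+1] + [n+1, k] - (1 - q^{n+1}) [n, k]`, which after clearing
q-factorials is `[a + b]_q = [a]_q + [b]_q - (1 - q) [a]_q [b]_q`. -/

open Finset

/-- The q-analogue `[n]_q = (1-q^n)/(1-q)`. -/
noncomputable def qNum {F : Type*} [Field F] (q : F) (n : ℕ) : F := (1 - q ^ n) / (1 - q)

/-- The q-factorial `[n]_q! = [1]_q [2]_q ⋯ [n]_q`. -/
noncomputable def qFact {F : Type*} [Field F] (q : F) (n : ℕ) : F :=
  ∏ j ∈ Finset.Icc 1 n, qNum q j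

/-- The q-binomial (Gaussian) coefficient `[n choose k]_q = [n]_q!/([k]_q! [n-k]_q!)`,
zero when `k > n`. -/
noncomputable def qBinom {F : Type*} [Field F] (q : F) (n k : ℕ) : F :=
  if k ≤ n then qFact q n / (qFact q k * qFact q (n - k)) else 0

/-- The continuous q-Hermite polynomials as functions of `x`:
`H_0 = 1`, `H_1 = 2x`, `H_{n+1} = 2x H_n - (1-qⁿ) H_{n-1}`. -/
noncomputable def contQHermite (q : ℝ) : ℕ → ℝ → ℝ
  | 0 => fun _ => 1
  | 1 => fun x => 2 * x
  | (n + 2) => fun x =>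
      2 * x * contQHermite q (n + 1) x - (1 - q ^ (n + 1)) * contQHermite q n x

section QAnalogues

variable {F : Type*} [Field F]

theorem qNum_add (q : F) (a b : ℕ) :
    qNum q (a + b) = qNum q a + qNum q b - (1 - q) * qNum q a * qNum q b := by
  rcases eq_or_ne q 1 with rfl | hq
  · simp [qNum]
  · have : (1 : F) - q ≠ 0 := sub_ne_zero.mpr hq.symm
    simp only [qNum, pow_add]
    field_simp
    ring

theorem one_sub_pow_eq_mul_qNum {q : F} (hq : q ≠ 1) (n : ℕ) :
    1 - q ^ n = (1 - q) * qNum q n := by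
  rw [qNum, mul_div_cancel₀ _ (sub_ne_zero.mpr hq.symm)]

theorem qNum_ne_zero {q : F} {j : ℕ} (h : q ^ j ≠ 1) : qNum q j ≠ 0 := by
  have hq : q ≠ 1 := by rintro rfl; simp at h
  exact div_ne_zero (sub_ne_zero.mpr h.symm) (sub_ne_zero.mpr hq.symm)

theorem qFact_zero (q : F) : qFact q 0 = 1 := by simp [qFact]

theorem qFact_succ (q : F) (n : ℕ) : qFact q (n + 1) = qFact q n * qNum q (n + 1) :=
  prod_Icc_succ_top (by omega) _

theorem qFact_ne_zero {q : F} (hq : ∀ j : ℕ, 1 ≤ j → q ^ j ≠ 1) (n : ℕ) : qFact q n ≠ 0 :=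
  prod_ne_zero_iff.mpr fun j hj => qNum_ne_zero (hq j (mem_Icc.mp hj).1)

theorem qBinom_add_left (q : F) (k l : ℕ) :
    qBinom q (k + l) k = qFact q (k + l) / (qFact q k * qFact q l) := by
  rw [qBinom, if_pos (Nat.le_add_right k l), Nat.add_sub_cancel_left]

theorem qBinom_zero_right {q : F} (hq : ∀ j : ℕ, 1 ≤ j → q ^ j ≠ 1) (n : ℕ) :
    qBinom q n 0 = 1 := by
  simp [qBinom, qFact_zero, qFact_ne_zero hq n]

theorem qBinom_self {q : F} (hq : ∀ j : ℕ, 1 ≤ j → q ^ j ≠ 1) (n : ℕ) : qBinom q n n = 1 := by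
  simp [qBinom, qFact_zero, qFact_ne_zero hq n]

theorem qBinom_add_two_succ {q : F} (hq : ∀ j : ℕ, 1 ≤ j → q ^ j ≠ 1) (k l : ℕ) :
    qBinom q (k + l + 2) (k + 1) =
      qBinom q (k + l + 1) (k + 1) + qBinom q (k + l + 1) k
        - (1 - q ^ (k + l + 1)) * qBinom q (k + l) k := by
  have hq1 : q ≠ 1 := by simpa using hq 1 le_rfl
  have b1 := qBinom_add_left q (k + 1) (l + 1)
  have b2 := qBinom_add_left q (k + 1) l
  have b3 := qBinom_add_left q k (l + 1)
  rw [show k + 1 + (l + 1) = k + l + 1 + 1 by ring] at b1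
  rw [show k + 1 + l = k + l + 1 by ring] at b2
  rw [← add_assoc] at b3
  rw [b1, b2, b3, qBinom_add_left, one_sub_pow_eq_mul_qNum hq1, qFact_succ, qFact_succ,
    qFact_succ q k, qFact_succ q l, show k + l + 1 + 1 = (k + 1) + (l + 1) by ring,
    qNum_add q (k + 1) (l + 1)]
  have hk := qFact_ne_zero hq k
  have hl := qFact_ne_zero hq l
  have hk1 := qNum_ne_zero (hq (k + 1) (by omega))
  have hl1 := qNum_ne_zero (hq (l + 1) (by omega))
  field_simp
  ring

end QAnalogues

section QHermiteSum

variable {K : Type*} [Field K]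

noncomputable def qHermiteSum (q z : K) (n : ℕ) : K :=
  ∑ k ∈ range (n + 1), qBinom q n k * z ^ ((n : ℤ) - 2 * k)

theorem qHermiteSum_zero {q : K} (hq : ∀ j : ℕ, 1 ≤ j → q ^ j ≠ 1) (z : K) :
    qHermiteSum q z 0 = 1 := by
  simp [qHermiteSum, qBinom_zero_right hq]

theorem qHermiteSum_one {q : K} (hq : ∀ j : ℕ, 1 ≤ j → q ^ j ≠ 1) (z : K) :
    qHermiteSum q z 1 = z + z⁻¹ := by
  simp [qHermiteSum, sum_range_succ, qBinom_zero_right hq, qBinom_self hq]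

theorem qHermiteSum_add_two {q : K} (hq : ∀ j : ℕ, 1 ≤ j → q ^ j ≠ 1) {z : K} (hz : z ≠ 0)
    (n : ℕ) :
    qHermiteSum q z (n + 2) =
      (z + z⁻¹) * qHermiteSum q z (n + 1) - (1 - q ^ (n + 1)) * qHermiteSum q z n := by
  have hup : z * qHermiteSum q z (n + 1) =
      ∑ k ∈ range (n + 1), qBinom q (n + 1) (k + 1) * z ^ ((n : ℤ) - 2 * k)
        + z ^ ((n : ℤ) + 2) := by
    rw [qHermiteSum, mul_sum, sum_range_succ', qBinom_zero_right hq]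
    congr 1
    · refine sum_congr rfl fun k _ => ?_
      rw [mul_left_comm, ← zpow_one_add₀ hz]
      push_cast
      ring_nf
    · rw [one_mul, ← zpow_one_add₀ hz]
      push_cast
      ring_nf
  have hdown : z⁻¹ * qHermiteSum q z (n + 1) =
      ∑ k ∈ range (n + 1), qBinom q (n + 1) k * z ^ ((n : ℤ) - 2 * k)
        + z ^ (-(n : ℤ) - 2) := by
    rw [qHermiteSum, mul_sum, sum_range_succ, qBinom_self hq, ← zpow_neg_one]
    congr 1
    · refine sum_congr rfl fun k _ => ?_
      rw [mul_left_comm, ← zpow_add₀ hz]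
      push_cast
      ring_nf
    · rw [one_mul, ← zpow_add₀ hz]
      push_cast
      ring_nf
  have htop : qHermiteSum q z (n + 2) =
      ∑ k ∈ range (n + 1), qBinom q (n + 2) (k + 1) * z ^ ((n : ℤ) - 2 * k)
        + z ^ (-(n : ℤ) - 2) + z ^ ((n : ℤ) + 2) := by
    rw [qHermiteSum, sum_range_succ', sum_range_succ, qBinom_self hq, qBinom_zero_right hq]
    push_cast
    ring_nf
  have hmid : ∀ k ∈ range (n + 1), qBinom q (n + 2) (k + 1) =
      qBinom q (n + 1) (k + 1) + qBinom q (n + 1) k - (1 - q ^ (n + 1)) * qBinom q n k := by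
    intro k hk
    obtain ⟨l, rfl⟩ := Nat.exists_eq_add_of_le (mem_range_succ_iff.mp hk)
    exact qBinom_add_two_succ hq k l
  rw [htop, add_mul, hup, hdown, sum_congr rfl fun k hk => by rw [hmid k hk], qHermiteSum,
    mul_sum]
  simp only [add_mul, sub_mul, sum_add_distrib, sum_sub_distrib, mul_assoc]
  ring

end QHermiteSum

theorem contQHermite_eq_qHermiteSum {q : ℝ} (hq : ∀ j : ℕ, 1 ≤ j → (q : ℂ) ^ j ≠ 1) {x : ℝ}
    {z : ℂ} (hz : z ≠ 0) (hx : 2 * (x : ℂ) = z + z⁻¹) (n : ℕ) :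
    (contQHermite q n x : ℂ) = qHermiteSum (q : ℂ) z n := by
  induction n using Nat.twoStepInduction with
  | zero => simp [contQHermite, qHermiteSum_zero hq]
  | one => simp [contQHermite, qHermiteSum_one hq, hx]
  | more n ih₀ ih₁ =>
    simp only [contQHermite]
    push_cast
    rw [ih₀, ih₁, hx, qHermiteSum_add_two hq hz]

/-- `H_n(cos θ | q) = Σ_{k=0}^n [n choose k]_q e^{i(n-2k)θ}`. -/
theorem contQHermite_cos (q : ℝ) (hq : ∀ j : ℕ, 1 ≤ j → q ^ j ≠ 1)
    (n : ℕ) (θ : ℝ) :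
    (contQHermite q n (Real.cos θ) : ℂ) =
      ∑ k ∈ Finset.range (n + 1),
        (qBinom q n k : ℂ) * Complex.exp (Complex.I * (((n : ℤ) - 2 * k : ℤ) : ℂ) * θ) := by
  have hqC : ∀ j : ℕ, 1 ≤ j → (q : ℂ) ^ j ≠ 1 := fun j hj h => hq j hj (mod_cast h)
  have hcos : 2 * (Real.cos θ : ℂ) =
      Complex.exp (θ * Complex.I) + (Complex.exp (θ * Complex.I))⁻¹ := by
    rw [Complex.ofReal_cos, Complex.two_cos, neg_mul, Complex.exp_neg]
  rw [contQHermite_eq_qHermiteSum hqC (Complex.exp_ne_zero _) hcos, qHermiteSum]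
  refine sum_congr rfl fun k _ => ?_
  rw [← Complex.exp_int_mul]
  ring_nf
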